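/- The normalized-background TMSV total QFI 𝓘(M) = 4𝒩_S[N_B + 1 + 𝒩_S(N_B + 1 - η²)/M] / ((N_B + 1 - η²)[N_B + 1 + 𝒩_S(2N_B + 1 - η²)/M]) is strictly increasing in M (for 𝒩_S > 0, N_B > 0, η ∈ (0,1)) and converges to 4𝒩_S/(N_B + 1 - η²) as M → ∞, which equals the ultimate bound 4𝒩_S/(N_B + 1 - η²); moreover 𝓘(M) < 4𝒩_S/(N_B + 1 - η²) for every finite M. -/

import Mathlib

/-! Writing `x = 1/M`, the QFI is `4𝒩/(N_B + 1 - η²)` times the ratio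
`(N_B + 1 + p x)/(N_B + 1 + q x)` with `p = 𝒩(N_B + 1 - η²) < q = 𝒩(2N_B + 1 - η²)`.
Such a ratio decreases strictly from `1` on `x ≥ 0`, so the QFI increases strictly in `M`
and approaches the bound from below as `x → 0`. -/

noncomputable def Inorm (NB η 𝒩 M : ℝ) : ℝ :=
  4*𝒩*(NB + 1 + 𝒩*(NB + 1 - η^2)/M) /
    ((NB + 1 - η^2)*(NB + 1 + 𝒩*(2*NB + 1 - η^2)/M))

open Filter Topology

noncomputable def affineRatio (b p q x : ℝ) : ℝ := (b + p * x) / (b + q * x)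

section affineRatio

variable {b p q : ℝ}

lemma affineRatio_zero (hb : b ≠ 0) : affineRatio b p q 0 = 1 := by
  simp [affineRatio, hb]

lemma strictAntiOn_affineRatio (hb : 0 < b) (hq : 0 ≤ q) (hpq : p < q) :
    StrictAntiOn (affineRatio b p q) (Set.Ici 0) := by
  intro x hx y hy hxy
  have hdx : 0 < b + q * x := by have := mul_nonneg hq (Set.mem_Ici.mp hx); linarith
  have hdy : 0 < b + q * y := by have := mul_nonneg hq (Set.mem_Ici.mp hy); linarith
  rw [affineRatio, affineRatio, div_lt_div_iff₀ hdy hdx]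
  -- the cross-multiplied difference is `b (q - p) (y - x)`
  nlinarith [mul_pos (mul_pos hb (sub_pos.mpr hpq)) (sub_pos.mpr hxy)]

lemma affineRatio_lt_one (hb : 0 < b) (hq : 0 ≤ q) (hpq : p < q) {x : ℝ} (hx : 0 < x) :
    affineRatio b p q x < 1 := by
  simpa [affineRatio_zero hb.ne'] using
    strictAntiOn_affineRatio hb hq hpq Set.self_mem_Ici (Set.mem_Ici.mpr hx.le) hx

lemma tendsto_affineRatio_nhds_zero (hb : b ≠ 0) :
    Tendsto (affineRatio b p q) (𝓝 0) (𝓝 1) := by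
  have hcont : ContinuousAt (affineRatio b p q) 0 := by
    unfold affineRatio
    fun_prop (disch := simpa using hb)
  simpa [affineRatio_zero hb] using hcont.tendsto

end affineRatio

lemma Inorm_eq_mul_affineRatio (NB η 𝒩 M : ℝ) :
    Inorm NB η 𝒩 M = 4*𝒩/(NB + 1 - η^2) *
      affineRatio (NB + 1) (𝒩*(NB + 1 - η^2)) (𝒩*(2*NB + 1 - η^2)) M⁻¹ := by
  rw [Inorm, affineRatio, mul_div_mul_comm]
  simp only [div_eq_mul_inv]

theorem tmsv_normalized_saturates_bound (NB η 𝒩 : ℝ) (hNB : 0 < NB)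
    (hη0 : 0 < η) (hη1 : η < 1) (h𝒩 : 0 < 𝒩) :
    StrictMonoOn (fun M => Inorm NB η 𝒩 M) (Set.Ioi 0) ∧
    Filter.Tendsto (fun M => Inorm NB η 𝒩 M) Filter.atTop
      (nhds (4*𝒩/(NB + 1 - η^2))) ∧
    (∀ M : ℝ, 0 < M → Inorm NB η 𝒩 M < 4*𝒩/(NB + 1 - η^2)) := by
  have hη2 : η^2 < 1 := by nlinarith
  have ha : 0 < NB + 1 - η^2 := by linarith
  have hb : 0 < NB + 1 := by linarith
  have hq : 0 ≤ 𝒩*(2*NB + 1 - η^2) := mul_nonneg h𝒩.le (by linarith)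
  have hpq : 𝒩*(NB + 1 - η^2) < 𝒩*(2*NB + 1 - η^2) := by gcongr; linarith
  have hc : 0 < 4*𝒩/(NB + 1 - η^2) := by positivity
  simp only [Inorm_eq_mul_affineRatio]
  refine ⟨?_, ?_, fun M hM => ?_⟩
  · intro x hx y hy hxy
    refine mul_lt_mul_of_pos_left (strictAntiOn_affineRatio hb hq hpq ?_ ?_ ?_) hc
    · exact Set.mem_Ici.mpr (inv_pos.mpr hy).le
    · exact Set.mem_Ici.mpr (inv_pos.mpr hx).le
    · exact inv_strictAntiOn hx hy hxy
  · simpa using ((tendsto_affineRatio_nhds_zero hb.ne').comp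
      tendsto_inv_atTop_zero).const_mul (4*𝒩/(NB + 1 - η^2))
  · simpa using mul_lt_mul_of_pos_left (affineRatio_lt_one hb hq hpq (inv_pos.mpr hM)) hc
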